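/- Let β₀ > 0, K₁ > 0, T > 0, and let F : ℝ → ℝ be measurable with |F(x)| ≤ K₁ e^{β₀|x|} for all x ∈ ℝ. Then there exist constants K₅, K₆ (depending only on β₀, K₁, T) such that for all t ∈ (0, T] and all r ∈ ℝ, 2 |∫_ℝ (p_t(r+x) − p_t(r−x)) F(x) dx|² ≤ (1/t)(K₅ + K₆ e^{2β₀|r|}). -/

import Mathlib

/-!
The kernel absorbs the exponential weight at the cost of doubling the time:
`p_t(y) e^{β|y|} ≤ √2 e^{β²t} p_{2t}(y)`, by completing the square in the exponent.
Since `|x| ≤ |r| + |r ± x|`, the integrand is therefore dominated by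
`√2 K₁ e^{β₀²t} e^{β₀|r|} (p_{2t}(r+x) + p_{2t}(r-x))`, whose integral is `2√2 K₁ e^{β₀²t} e^{β₀|r|}`.
Squaring gives a bound uniform in `t ≤ T`, and `1 ≤ T/t` supplies the factor `1/t`.
-/

open MeasureTheory Real

/-- The one-dimensional heat (Gaussian) kernel `p_t(x) = (2πt)^{-1/2} exp(-x²/(2t))`. -/
noncomputable def heatKernel (t x : ℝ) : ℝ :=
  (Real.sqrt (2 * Real.pi * t))⁻¹ * Real.exp (-(x ^ 2) / (2 * t))

open ProbabilityTheory

lemma heatKernel_nonneg (t x : ℝ) : 0 ≤ heatKernel t x := by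
  unfold heatKernel; positivity

lemma heatKernel_neg (t x : ℝ) : heatKernel t (-x) = heatKernel t x := by
  simp [heatKernel]

lemma heatKernel_sub_eq_gaussianPDFReal {t : ℝ} (ht : 0 ≤ t) (μ x : ℝ) :
    heatKernel t (x - μ) = gaussianPDFReal μ t.toNNReal x := by
  simp [heatKernel, gaussianPDFReal, Real.coe_toNNReal t ht]

lemma integrable_heatKernel_sub {t : ℝ} (ht : 0 ≤ t) (μ : ℝ) :
    Integrable (fun x ↦ heatKernel t (x - μ)) := by
  simpa only [heatKernel_sub_eq_gaussianPDFReal ht] using integrable_gaussianPDFReal μ _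

lemma integral_heatKernel_sub {t : ℝ} (ht : 0 < t) (μ : ℝ) :
    ∫ x, heatKernel t (x - μ) = 1 := by
  simpa only [heatKernel_sub_eq_gaussianPDFReal ht.le] using
    integral_gaussianPDFReal_eq_one μ (by simpa using ht)

lemma heatKernel_mul_exp_abs_le {t : ℝ} (ht : 0 < t) (β y : ℝ) :
    heatKernel t y * exp (β * |y|) ≤ √2 * exp (β ^ 2 * t) * heatKernel (2 * t) y := by
  have hexp : -(y ^ 2) / (2 * t) + β * |y| ≤ β ^ 2 * t + -(y ^ 2) / (2 * (2 * t)) := by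
    have hsquare : β ^ 2 * t + -(y ^ 2) / (2 * (2 * t)) - (-(y ^ 2) / (2 * t) + β * |y|) =
        (|y| - 2 * β * t) ^ 2 / (4 * t) := by
      rw [← sq_abs y]; field_simp; ring
    linarith [div_nonneg (sq_nonneg (|y| - 2 * β * t)) (by positivity : (0 : ℝ) ≤ 4 * t)]
  have hsqrt : √(2 * π * (2 * t)) = √2 * √(2 * π * t) := by
    rw [← Real.sqrt_mul zero_le_two]; ring_nf
  unfold heatKernel
  calc (√(2 * π * t))⁻¹ * exp (-(y ^ 2) / (2 * t)) * exp (β * |y|)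
      = (√(2 * π * t))⁻¹ * exp (-(y ^ 2) / (2 * t) + β * |y|) := by rw [mul_assoc, exp_add]
    _ ≤ (√(2 * π * t))⁻¹ * exp (β ^ 2 * t + -(y ^ 2) / (2 * (2 * t))) := by gcongr
    _ = √2 * exp (β ^ 2 * t) * ((√(2 * π * (2 * t)))⁻¹ * exp (-(y ^ 2) / (2 * (2 * t)))) := by
        rw [hsqrt, exp_add]; field_simp

lemma heatKernel_mul_abs_le {t β K a x y r : ℝ} (ht : 0 < t) (hβ : 0 ≤ β)
    (ha : |a| ≤ K * exp (β * |x|)) (hxy : |x| ≤ |r| + |y|) :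
    heatKernel t y * |a| ≤ √2 * K * exp (β ^ 2 * t) * exp (β * |r|) * heatKernel (2 * t) y := by
  have hK : 0 ≤ K := nonneg_of_mul_nonneg_left ((abs_nonneg a).trans ha) (exp_pos _)
  have hweight : |a| ≤ K * exp (β * |r|) * exp (β * |y|) := by
    rw [mul_assoc, ← exp_add, ← mul_add]
    exact ha.trans (by gcongr)
  calc heatKernel t y * |a|
      ≤ heatKernel t y * (K * exp (β * |r|) * exp (β * |y|)) :=
        mul_le_mul_of_nonneg_left hweight (heatKernel_nonneg t y)
    _ = K * exp (β * |r|) * (heatKernel t y * exp (β * |y|)) := by ring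
    _ ≤ K * exp (β * |r|) * (√2 * exp (β ^ 2 * t) * heatKernel (2 * t) y) :=
        mul_le_mul_of_nonneg_left (heatKernel_mul_exp_abs_le ht β y) (by positivity)
    _ = √2 * K * exp (β ^ 2 * t) * exp (β * |r|) * heatKernel (2 * t) y := by ring

lemma abs_integral_heatKernel_sub_mul_le {t β K : ℝ} (ht : 0 < t) (hβ : 0 ≤ β) {F : ℝ → ℝ}
    (hF : ∀ x, |F x| ≤ K * exp (β * |x|)) (r : ℝ) :
    |∫ x, (heatKernel t (r + x) - heatKernel t (r - x)) * F x| ≤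
      2 * √2 * K * exp (β ^ 2 * t) * exp (β * |r|) := by
  set c := √2 * K * exp (β ^ 2 * t) * exp (β * |r|)
  have ht2 : 0 < 2 * t := by positivity
  have hplus (x : ℝ) : heatKernel (2 * t) (r + x) = heatKernel (2 * t) (x - -r) := by
    ring_nf
  have hminus (x : ℝ) : heatKernel (2 * t) (r - x) = heatKernel (2 * t) (x - r) := by
    rw [← heatKernel_neg, neg_sub]
  have hint : Integrable fun x ↦ heatKernel (2 * t) (r + x) + heatKernel (2 * t) (r - x) := by
    simp only [hplus, hminus]
    exact (integrable_heatKernel_sub ht2.le _).add (integrable_heatKernel_sub ht2.le _)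
  have hdom (x : ℝ) : ‖(heatKernel t (r + x) - heatKernel t (r - x)) * F x‖ ≤
      c * (heatKernel (2 * t) (r + x) + heatKernel (2 * t) (r - x)) := by
    have hx₁ : |x| ≤ |r| + |r + x| := by
      simpa using abs_sub_le x (r + x) 0
    have hx₂ : |x| ≤ |r| + |r - x| := by
      simpa [abs_sub_comm x r, add_comm] using abs_sub_le x r 0
    calc ‖(heatKernel t (r + x) - heatKernel t (r - x)) * F x‖
        ≤ (heatKernel t (r + x) + heatKernel t (r - x)) * |F x| := by
          rw [Real.norm_eq_abs, abs_mul]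
          gcongr
          simpa [abs_of_nonneg (heatKernel_nonneg _ _)] using
            abs_sub (heatKernel t (r + x)) (heatKernel t (r - x))
      _ ≤ c * heatKernel (2 * t) (r + x) + c * heatKernel (2 * t) (r - x) := by
          rw [add_mul]
          exact add_le_add (heatKernel_mul_abs_le ht hβ (hF x) hx₁)
            (heatKernel_mul_abs_le ht hβ (hF x) hx₂)
      _ = c * (heatKernel (2 * t) (r + x) + heatKernel (2 * t) (r - x)) := by ring
  have hmass : ∫ x, (heatKernel (2 * t) (r + x) + heatKernel (2 * t) (r - x)) = 2 := by
    simp only [hplus, hminus]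
    rw [integral_add (integrable_heatKernel_sub ht2.le _) (integrable_heatKernel_sub ht2.le _),
      integral_heatKernel_sub ht2, integral_heatKernel_sub ht2]
    norm_num
  calc |∫ x, (heatKernel t (r + x) - heatKernel t (r - x)) * F x|
      ≤ ∫ x, c * (heatKernel (2 * t) (r + x) + heatKernel (2 * t) (r - x)) :=
        norm_integral_le_of_norm_le (hint.const_mul c) (.of_forall hdom)
    _ = 2 * c := by rw [integral_const_mul, hmass, mul_comm]
    _ = 2 * √2 * K * exp (β ^ 2 * t) * exp (β * |r|) := by ring

theorem heatKernel_antisym_conv_sq_le_general (β₀ K₁ T : ℝ) (hβ₀ : 0 < β₀)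
    (F : ℝ → ℝ)
    (hF : ∀ x : ℝ, |F x| ≤ K₁ * Real.exp (β₀ * |x|)) :
    ∃ K₅ K₆ : ℝ, ∀ t r : ℝ, 0 < t → t ≤ T →
      2 * |∫ x : ℝ, (heatKernel t (r + x) - heatKernel t (r - x)) * F x| ^ 2 ≤
        (1 / t) * (K₅ + K₆ * Real.exp (2 * β₀ * |r|)) := by
  refine ⟨0, 16 * T * K₁ ^ 2 * exp (2 * β₀ ^ 2 * T), fun t r ht htT ↦ ?_⟩
  have hI := abs_integral_heatKernel_sub_mul_le ht hβ₀.le hF r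
  have hTt : 1 ≤ T / t := (one_le_div ht).2 htT
  calc 2 * |∫ x, (heatKernel t (r + x) - heatKernel t (r - x)) * F x| ^ 2
      ≤ 2 * (2 * √2 * K₁ * exp (β₀ ^ 2 * t) * exp (β₀ * |r|)) ^ 2 := by gcongr
    _ = 16 * K₁ ^ 2 * exp (2 * β₀ ^ 2 * t) * exp (2 * β₀ * |r|) := by
        simp only [mul_pow, ← exp_nat_mul, Real.sq_sqrt zero_le_two]
        push_cast; ring_nf
    _ ≤ 16 * K₁ ^ 2 * exp (2 * β₀ ^ 2 * T) * exp (2 * β₀ * |r|) := by gcongr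
    _ ≤ T / t * (16 * K₁ ^ 2 * exp (2 * β₀ ^ 2 * T) * exp (2 * β₀ * |r|)) :=
        le_mul_of_one_le_left (by positivity) hTt
    _ = (1 / t) * (0 + 16 * T * K₁ ^ 2 * exp (2 * β₀ ^ 2 * T) * exp (2 * β₀ * |r|)) := by
        ring

/-- Let `β₀ > 0`, `K₁ > 0`, `T > 0` and let `F : ℝ → ℝ` be measurable with
`|F x| ≤ K₁ e^{β₀|x|}` for all `x`.  Then there are constants `K₅, K₆` (depending only on
`β₀, K₁, T`) such that for all `t ∈ (0, T]` and all `r ∈ ℝ`,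
`2 |∫_ℝ (p_t(r+x) - p_t(r-x)) F x dx|² ≤ (1/t) (K₅ + K₆ e^{2β₀|r|})`. -/
theorem heatKernel_antisym_conv_sq_le (β₀ K₁ T : ℝ) (hβ₀ : 0 < β₀) (hK₁ : 0 < K₁) (hT : 0 < T)
    (F : ℝ → ℝ) (hFmeas : Measurable F)
    (hF : ∀ x : ℝ, |F x| ≤ K₁ * Real.exp (β₀ * |x|)) :
    ∃ K₅ K₆ : ℝ, ∀ t r : ℝ, 0 < t → t ≤ T →
      2 * |∫ x : ℝ, (heatKernel t (r + x) - heatKernel t (r - x)) * F x| ^ 2 ≤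
        (1 / t) * (K₅ + K₆ * Real.exp (2 * β₀ * |r|)) :=
  heatKernel_antisym_conv_sq_le_general β₀ K₁ T hβ₀ F hF
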